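/- Let 𝔨 be a finite-dimensional real Lie algebra with an invariant inner product. Let 𝔞 be a smooth solution of the Yang–Mills–Poisson equation and 𝔲 : ℝ³ × [0,∞) → 𝔨³ a smooth map, both vanishing for |x| ≥ R (some R > 0, for all s). Assume the function s ↦ (∂_s 𝔞(·,s), ∂_s 𝔲(·,s))_{L²} + (𝔟(·,s), d_𝔞 𝔲(·,s))_{L²} is integrable on [0,∞) and that (𝔲(·,s), ∂_s 𝔞(·,s))_{L²} → 0 as s → ∞. Then ∫₀^∞ [ (∂_s 𝔞(·,s), ∂_s 𝔲(·,s))_{L²} + (𝔟(·,s), d_𝔞 𝔲(·,s))_{L²} ] ds = −(𝔲(·,0), ∂_s 𝔞(·,0))_{L²}. (This is the identity behind the first-derivative formula ∂_u 𝒫(A) = −2(u, 𝔞′(0)) for the Poisson action.) -/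

import Mathlib

open MeasureTheory

/-- Partial derivative `∂_j f` of a function on `ℝ³` with values in a normed
real vector space. -/
noncomputable def pd3 {𝕜 : Type*} [NormedAddCommGroup 𝕜] [NormedSpace ℝ 𝕜]
    (j : Fin 3) (f : (Fin 3 → ℝ) → 𝕜) (x : Fin 3 → ℝ) : 𝕜 :=
  fderiv ℝ f x (Pi.single j 1)

/-- Spatial curvature `𝔟_{jk}(x,s) = ∂_j 𝔞_k − ∂_k 𝔞_j + [𝔞_j, 𝔞_k]` of a
time-dependent `𝔨`-valued gauge potential, with bracket `β`. -/
noncomputable def curvK {𝔨 : Type*} [NormedAddCommGroup 𝔨] [NormedSpace ℝ 𝔨]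
    (β : 𝔨 →ₗ[ℝ] 𝔨 →ₗ[ℝ] 𝔨) (𝔞 : Fin 3 → (Fin 3 → ℝ) → ℝ → 𝔨) (j k : Fin 3)
    (x : Fin 3 → ℝ) (s : ℝ) : 𝔨 :=
  pd3 j (fun y => 𝔞 k y s) x - pd3 k (fun y => 𝔞 j y s) x
    + β (𝔞 j x s) (𝔞 k x s)

/-- Covariant exterior derivative of a time-dependent `𝔨`-valued 1-form `𝔲`
along a potential `𝔞`: `(d_𝔞 𝔲)_{jk} = ∂_j^𝔞 𝔲_k − ∂_k^𝔞 𝔲_j`. -/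
noncomputable def covExtK {𝔨 : Type*} [NormedAddCommGroup 𝔨] [NormedSpace ℝ 𝔨]
    (β : 𝔨 →ₗ[ℝ] 𝔨 →ₗ[ℝ] 𝔨) (𝔞 𝔲 : Fin 3 → (Fin 3 → ℝ) → ℝ → 𝔨) (j k : Fin 3)
    (x : Fin 3 → ℝ) (s : ℝ) : 𝔨 :=
  (pd3 j (fun y => 𝔲 k y s) x + β (𝔞 j x s) (𝔲 k x s))
    - (pd3 k (fun y => 𝔲 j y s) x + β (𝔞 k x s) (𝔲 j x s))

/-- The Yang–Mills–Poisson equation in temporal gauge: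
`∂_s² 𝔞_j = −∑_k ∂_k^𝔞 𝔟_{kj}` where `∂_k^𝔞 ξ = ∂_k ξ + [𝔞_k, ξ]`. -/
def YangMillsPoissonK {𝔨 : Type*} [NormedAddCommGroup 𝔨] [NormedSpace ℝ 𝔨]
    (β : 𝔨 →ₗ[ℝ] 𝔨 →ₗ[ℝ] 𝔨) (𝔞 : Fin 3 → (Fin 3 → ℝ) → ℝ → 𝔨) : Prop :=
  ∀ j x (s : ℝ), 0 ≤ s →
    deriv (fun τ => deriv (fun σ => 𝔞 j x σ) τ) s =
      -∑ k, (pd3 k (fun y => curvK β 𝔞 k j y s) x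
        + β (𝔞 k x s) (curvK β 𝔞 k j x s))

/-!
Let `F(s) = ∑ⱼ (𝔲ⱼ(·,s), ∂ₛ𝔞ⱼ(·,s))_{L²}`. Since `𝔲` is compactly supported, `F` may be
differentiated under the integral sign, giving `F' = (∂ₛ𝔞, ∂ₛ𝔲) + (𝔲, ∂ₛ²𝔞)`. By the
Yang–Mills–Poisson equation `∂ₛ²𝔞ⱼ = -∑ₖ ∂ₖ^𝔞 𝔟ₖⱼ`; integrating by parts and using the
invariance of the inner product to move the bracket, `(𝔲, ∂ₛ²𝔞) = ∑ⱼₖ (∂ₖ^𝔞 𝔲ⱼ, 𝔟ₖⱼ)`, which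
is `(𝔟, d_𝔞 𝔲)` by antisymmetry of `𝔟`. Hence the integrand is `F'`, and the fundamental
theorem of calculus on `[0, ∞)` together with `F(s) → 0` gives `∫₀^∞ F' = -F(0)`.
-/

open Function Filter Set Topology
open scoped RealInnerProductSpace

section ParametricIntegral

variable {E G : Type*} [NormedAddCommGroup E] [NormedSpace ℝ E]
  [NormedAddCommGroup G] [NormedSpace ℝ G]

theorem ContDiff.hasDerivAt_of_uncurry {f : E → ℝ → G} {n : WithTop ℕ∞}
    (hf : ContDiff ℝ n (uncurry f)) (hn : n ≠ 0) (x : E) (t : ℝ) :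
    HasDerivAt (f x) (fderiv ℝ (uncurry f) (x, t) (0, 1)) t := by
  have hp : HasDerivAt (fun σ : ℝ => (x, σ)) ((0 : E), (1 : ℝ)) t :=
    (hasDerivAt_const t x).prodMk (hasDerivAt_id t)
  exact ((hf.differentiable hn).differentiableAt.hasFDerivAt).comp_hasDerivAt t hp

theorem ContDiff.uncurry_right {f : E → ℝ → G} {n : WithTop ℕ∞} (t : ℝ)
    (hf : ContDiff ℝ n (uncurry f)) : ContDiff ℝ n fun x => f x t :=
  hf.comp (contDiff_prodMk_left t)

theorem ContDiff.uncurry_deriv {f : E → ℝ → G} {m n : WithTop ℕ∞}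
    (hf : ContDiff ℝ n (uncurry f)) (hmn : m + 1 ≤ n) :
    ContDiff ℝ m (uncurry fun x t => deriv (f x) t) := by
  have hn : n ≠ 0 := ne_bot_of_le_ne_bot (by simp) hmn
  have h : (uncurry fun x t => deriv (f x) t) = fun p => fderiv ℝ (uncurry f) p (0, 1) :=
    funext fun p => (hf.hasDerivAt_of_uncurry hn p.1 p.2).deriv
  rw [h]
  exact (hf.fderiv_right hmn).clm_apply contDiff_const

theorem deriv_eq_zero_of_forall_mem_eq_zero {f : ℝ → G} {U : Set ℝ} (hU : IsOpen U)
    (hf : ∀ t ∈ U, f t = 0) {s : ℝ} (hs : s ∈ U) : deriv f s = 0 := by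
  have : f =ᶠ[𝓝 s] fun _ => 0 := eventually_of_mem (hU.mem_nhds hs) hf
  rw [this.deriv_eq, deriv_const]

variable [MeasurableSpace E] [OpensMeasurableSpace E] [SecondCountableTopology E]
  {μ : Measure E} [IsFiniteMeasureOnCompacts μ]

theorem hasDerivAt_integral_of_contDiff_of_forall_notMem_eq_zero {f : E → ℝ → G}
    (hf : ContDiff ℝ 1 (uncurry f)) {K : Set E} (hK : IsCompact K) {U : Set ℝ}
    (hU : IsOpen U) (hfK : ∀ x ∉ K, ∀ t ∈ U, f x t = 0) {s : ℝ} (hs : s ∈ U) :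
    HasDerivAt (fun t => ∫ x, f x t ∂μ) (∫ x, deriv (f x) s ∂μ) s := by
  obtain ⟨δ, hδ, hδU⟩ := Metric.nhds_basis_closedBall.mem_iff.1 (hU.mem_nhds hs)
  have hf' : Continuous (uncurry fun x t => deriv (f x) t) :=
    (hf.uncurry_deriv (m := 0) le_rfl).continuous
  obtain ⟨C, hC⟩ := (hK.prod (isCompact_closedBall s δ)).exists_bound_of_continuousOn
    hf'.continuousOn
  refine (hasDerivAt_integral_of_dominated_loc_of_deriv_le (F := fun t x => f x t)
    (F' := fun t x => deriv (f x) t)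
    (bound := K.indicator fun _ => C) (Metric.closedBall_mem_nhds s hδ)
    (Eventually.of_forall fun t => (hf.continuous.uncurry_right t).aestronglyMeasurable)
    ((hf.continuous.uncurry_right s).integrable_of_hasCompactSupport
      (HasCompactSupport.intro hK fun x hx => hfK x hx s hs))
    (hf'.uncurry_right s).aestronglyMeasurable
    (ae_of_all _ fun x t ht => ?_)
    ((integrable_indicator_iff hK.measurableSet).2 (integrableOn_const hK.measure_ne_top))
    (ae_of_all _ fun x t _ =>
      (hf.hasDerivAt_of_uncurry one_ne_zero x t).differentiableAt.hasDerivAt)).2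
  by_cases hx : x ∈ K
  · rw [indicator_of_mem hx]
    exact hC (x, t) ⟨hx, ht⟩
  · rw [indicator_of_notMem hx,
      deriv_eq_zero_of_forall_mem_eq_zero hU (hfK x hx) (hδU ht), norm_zero]

end ParametricIntegral

section ParametricContinuity

variable {E G T : Type*} [TopologicalSpace E] [NormedAddCommGroup G] [NormedSpace ℝ G]
  [TopologicalSpace T] [MeasurableSpace E] [OpensMeasurableSpace E]
  {μ : Measure E} [IsFiniteMeasureOnCompacts μ]

theorem continuousOn_integral_of_continuous_of_forall_notMem_eq_zero {f : E → T → G}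
    (hf : Continuous (uncurry f)) {K : Set E} (hK : IsCompact K) {S : Set T}
    (hfK : ∀ x ∉ K, ∀ t ∈ S, f x t = 0) : ContinuousOn (fun t => ∫ x, f x t ∂μ) S := by
  have h := continuousOn_integral_bilinear_of_locally_integrable_of_compact_support
    (ContinuousLinearMap.lsmul ℝ ℝ) (μ := μ) (f := fun t x => f x t) (g := fun _ => (1 : ℝ)) hK
    (hf.comp continuous_swap).continuousOn (fun t x ht hx => hfK x hx t ht)
    (integrableOn_const hK.measure_ne_top)
  simpa using h

end ParametricContinuity

section BilinearMaps

variable {X E F G : Type*} [TopologicalSpace X]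

theorem HasCompactSupport.inner_right [NormedAddCommGroup E] [InnerProductSpace ℝ E]
    {v w : X → E} (hv : HasCompactSupport v) : HasCompactSupport fun x => ⟪v x, w x⟫ :=
  hv.mono (support_subset_iff'.2 fun x hx => by simp [notMem_support.1 hx])

theorem HasCompactSupport.inner_left [NormedAddCommGroup E] [InnerProductSpace ℝ E]
    {v w : X → E} (hw : HasCompactSupport w) : HasCompactSupport fun x => ⟪v x, w x⟫ :=
  hw.mono (support_subset_iff'.2 fun x hx => by simp [notMem_support.1 hx])

variable [NormedAddCommGroup E] [NormedSpace ℝ E] [NormedAddCommGroup F] [NormedSpace ℝ F]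
  [NormedAddCommGroup G] [NormedSpace ℝ G] {β : E →ₗ[ℝ] F →ₗ[ℝ] G}

theorem HasCompactSupport.linearMap_apply₂ {a : X → E} {u : X → F} (hu : HasCompactSupport u) :
    HasCompactSupport fun x => β (a x) (u x) :=
  hu.mono (support_subset_iff'.2 fun x hx => by simp [notMem_support.1 hx])

variable [FiniteDimensional ℝ E] [FiniteDimensional ℝ F]

theorem Continuous.linearMap_apply₂ (β : E →ₗ[ℝ] F →ₗ[ℝ] G) {a : X → E} {b : X → F}
    (ha : Continuous a) (hb : Continuous b) : Continuous fun x => β (a x) (b x) :=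
  β.toContinuousBilinearMap.continuous₂.comp (ha.prodMk hb)

theorem ContDiff.linearMap_apply₂ {V : Type*} [NormedAddCommGroup V] [NormedSpace ℝ V]
    (β : E →ₗ[ℝ] F →ₗ[ℝ] G) {n : WithTop ℕ∞} {a : V → E} {b : V → F}
    (ha : ContDiff ℝ n a) (hb : ContDiff ℝ n b) : ContDiff ℝ n fun x => β (a x) (b x) :=
  β.toContinuousBilinearMap.isBoundedBilinearMap.contDiff.comp (ha.prodMk hb)

end BilinearMaps

section InnerDeriv

variable {E F : Type*} [NormedAddCommGroup E] [NormedSpace ℝ E] [MeasurableSpace E]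
  [OpensMeasurableSpace E] [SecondCountableTopology E] {μ : Measure E}
  [IsFiniteMeasureOnCompacts μ] [NormedAddCommGroup F] [InnerProductSpace ℝ F]

theorem hasDerivAt_integral_inner_deriv {a u : E → ℝ → F} (ha : ContDiff ℝ 2 (uncurry a))
    (hu : ContDiff ℝ 1 (uncurry u)) {K : Set E} (hK : IsCompact K) {U : Set ℝ} (hU : IsOpen U)
    (huK : ∀ x ∉ K, ∀ t ∈ U, u x t = 0) {s : ℝ} (hs : s ∈ U) :
    HasDerivAt (fun t => ∫ x, ⟪u x t, deriv (a x) t⟫ ∂μ)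
      ((∫ x, ⟪deriv (a x) s, deriv (u x) s⟫ ∂μ)
        + ∫ x, ⟪u x s, deriv (fun t => deriv (a x) t) s⟫ ∂μ) s := by
  have hda : ContDiff ℝ 1 (uncurry fun x t => deriv (a x) t) := ha.uncurry_deriv (by norm_num)
  have hdu : HasCompactSupport fun x => deriv (u x) s :=
    HasCompactSupport.intro hK fun x hx => deriv_eq_zero_of_forall_mem_eq_zero hU (huK x hx) hs
  have huc : HasCompactSupport fun x => u x s :=
    HasCompactSupport.intro hK fun x hx => huK x hx s hs
  have hpt : ∀ x, deriv (fun t => ⟪u x t, deriv (a x) t⟫) s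
      = ⟪deriv (a x) s, deriv (u x) s⟫ + ⟪u x s, deriv (fun t => deriv (a x) t) s⟫ := by
    intro x
    rw [((hu.hasDerivAt_of_uncurry one_ne_zero x s).differentiableAt.hasDerivAt.inner ℝ
      (hda.hasDerivAt_of_uncurry one_ne_zero x s).differentiableAt.hasDerivAt).deriv,
      add_comm, real_inner_comm (deriv (a x) s)]
  have h := hasDerivAt_integral_of_contDiff_of_forall_notMem_eq_zero (μ := μ)
    (f := fun x t => ⟪u x t, deriv (a x) t⟫) (hu.inner ℝ hda)
    hK hU (fun x hx t ht => by simp [huK x hx t ht]) hs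
  simp only [hpt] at h
  rwa [integral_add] at h
  · refine Continuous.integrable_of_hasCompactSupport ?_ hdu.inner_left
    exact (hda.continuous.uncurry_right s).inner
      ((hu.uncurry_deriv (m := 0) (by simp)).continuous.uncurry_right s)
  · refine Continuous.integrable_of_hasCompactSupport ?_ huc.inner_right
    exact (hu.continuous.uncurry_right s).inner
      ((hda.uncurry_deriv (m := 0) (by simp)).continuous.uncurry_right s)

end InnerDeriv

section SpatialDerivative

variable {F : Type*} [NormedAddCommGroup F] [NormedSpace ℝ F] {g : (Fin 3 → ℝ) → F}

theorem ContDiff.pd3 {m n : WithTop ℕ∞} (hg : ContDiff ℝ n g) (hmn : m + 1 ≤ n) (j : Fin 3) :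
    ContDiff ℝ m (pd3 j g) :=
  (hg.fderiv_right hmn).clm_apply contDiff_const

theorem HasCompactSupport.pd3 (hg : HasCompactSupport g) (j : Fin 3) :
    HasCompactSupport (pd3 j g) :=
  hg.fderiv_apply (𝕜 := ℝ) _

theorem integral_inner_pd3_eq_neg {𝔨 : Type*} [NormedAddCommGroup 𝔨] [InnerProductSpace ℝ 𝔨]
    {u w : (Fin 3 → ℝ) → 𝔨} (hu : ContDiff ℝ 1 u) (hw : ContDiff ℝ 1 w)
    (huc : HasCompactSupport u) (k : Fin 3) :
    ∫ x, ⟪u x, pd3 k w x⟫ = -∫ x, ⟪pd3 k u x, w x⟫ :=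
  integral_bilinear_fderiv_right_eq_neg_left_of_integrable (B := innerSL ℝ)
    (((hu.pd3 (m := 0) (by simp) k).continuous.inner hw.continuous).integrable_of_hasCompactSupport
      (huc.pd3 k).inner_right)
    ((hu.continuous.inner (hw.pd3 (m := 0) (by simp) k).continuous).integrable_of_hasCompactSupport
      huc.inner_right)
    ((hu.continuous.inner hw.continuous).integrable_of_hasCompactSupport huc.inner_right)
    (fun x _ => (hu.differentiable one_ne_zero).differentiableAt)
    (fun x _ => (hw.differentiable one_ne_zero).differentiableAt)

end SpatialDerivative

section CovariantDerivative

variable {𝔨 : Type*} [NormedAddCommGroup 𝔨] [InnerProductSpace ℝ 𝔨]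

noncomputable def covDeriv (β : 𝔨 →ₗ[ℝ] 𝔨 →ₗ[ℝ] 𝔨) (a : (Fin 3 → ℝ) → 𝔨) (k : Fin 3)
    (u : (Fin 3 → ℝ) → 𝔨) (x : Fin 3 → ℝ) : 𝔨 :=
  pd3 k u x + β (a x) (u x)

variable {β : 𝔨 →ₗ[ℝ] 𝔨 →ₗ[ℝ] 𝔨} {a u w : (Fin 3 → ℝ) → 𝔨}

theorem HasCompactSupport.covDeriv (hu : HasCompactSupport u) (k : Fin 3) :
    HasCompactSupport (covDeriv β a k u) :=
  (hu.pd3 k).add hu.linearMap_apply₂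

variable [FiniteDimensional ℝ 𝔨]

theorem ContDiff.continuous_covDeriv (ha : Continuous a) (hu : ContDiff ℝ 1 u) (k : Fin 3) :
    Continuous (covDeriv β a k u) :=
  (hu.pd3 (m := 0) (by simp) k).continuous.add (ha.linearMap_apply₂ β hu.continuous)

theorem integral_inner_covDeriv_eq_neg (hinv : ∀ x y z : 𝔨, ⟪β z x, y⟫ + ⟪x, β z y⟫ = 0)
    (ha : Continuous a) (hu : ContDiff ℝ 1 u) (hw : ContDiff ℝ 1 w) (huc : HasCompactSupport u)
    (k : Fin 3) : ∫ x, ⟪u x, covDeriv β a k w x⟫ = -∫ x, ⟪covDeriv β a k u x, w x⟫ := by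
  have hβ : Integrable fun x => ⟪β (a x) (u x), w x⟫ :=
    ((ha.linearMap_apply₂ β hu.continuous).inner hw.continuous).integrable_of_hasCompactSupport
      huc.linearMap_apply₂.inner_right
  have hinv' : ∀ x, ⟪u x, β (a x) (w x)⟫ = -⟪β (a x) (u x), w x⟫ := fun x =>
    eq_neg_of_add_eq_zero_right (hinv (u x) (w x) (a x))
  simp only [covDeriv, inner_add_left, inner_add_right, hinv']
  rw [integral_add, integral_add, integral_neg, integral_inner_pd3_eq_neg hu hw huc]
  · ring
  · exact ((hu.pd3 (m := 0) (by simp) k).continuous.inner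
      hw.continuous).integrable_of_hasCompactSupport (huc.pd3 k).inner_right
  · exact hβ
  · exact (hu.continuous.inner
      (hw.pd3 (m := 0) (by simp) k).continuous).integrable_of_hasCompactSupport huc.inner_right
  · exact hβ.neg

end CovariantDerivative

section Curvature

theorem sum_sum_inner_eq_half_sum_sum_inner_sub {E ι : Type*} [NormedAddCommGroup E]
    [InnerProductSpace ℝ E] [Fintype ι] (B D : ι → ι → E) (hB : ∀ j k, B j k = -B k j) :
    ∑ j, ∑ k, ⟪D j k, B j k⟫ = 1 / 2 * ∑ j, ∑ k, ⟪B j k, D j k - D k j⟫ := by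
  have hswap : ∑ j, ∑ k, ⟪B j k, D k j⟫ = -∑ j, ∑ k, ⟪B j k, D j k⟫ := by
    rw [Finset.sum_comm, ← Finset.sum_neg_distrib]
    refine Finset.sum_congr rfl fun j _ => ?_
    rw [← Finset.sum_neg_distrib]
    refine Finset.sum_congr rfl fun k _ => ?_
    rw [hB, inner_neg_left]
  simp only [inner_sub_right, Finset.sum_sub_distrib, real_inner_comm (B _ _)]
  rw [hswap]
  ring

variable {𝔨 : Type*} [NormedAddCommGroup 𝔨] [InnerProductSpace ℝ 𝔨] {β : 𝔨 →ₗ[ℝ] 𝔨 →ₗ[ℝ] 𝔨}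
  {𝔞 𝔲 : Fin 3 → (Fin 3 → ℝ) → ℝ → 𝔨} {s : ℝ}

theorem curvK_swap (halt : β.IsAlt) (j k : Fin 3) (x : Fin 3 → ℝ) :
    curvK β 𝔞 j k x s = -curvK β 𝔞 k j x s := by
  rw [curvK, curvK, ← halt.neg (𝔞 j x s)]
  abel

variable [FiniteDimensional ℝ 𝔨]

theorem contDiff_curvK {n : WithTop ℕ∞} (ha : ∀ i, ContDiff ℝ (n + 1) fun x => 𝔞 i x s)
    (j k : Fin 3) : ContDiff ℝ n fun x => curvK β 𝔞 j k x s :=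
  (((ha k).pd3 le_rfl j).sub ((ha j).pd3 le_rfl k)).add
    (((ha j).of_le le_self_add).linearMap_apply₂ β ((ha k).of_le le_self_add))

theorem sum_integral_inner_covDeriv_curvK (halt : β.IsAlt)
    (hinv : ∀ x y z : 𝔨, ⟪β z x, y⟫ + ⟪x, β z y⟫ = 0)
    (ha : ∀ j, ContDiff ℝ 2 fun x => 𝔞 j x s) (hu : ∀ j, ContDiff ℝ 1 fun x => 𝔲 j x s)
    (huc : ∀ j, HasCompactSupport fun x => 𝔲 j x s) :
    ∑ j, ∫ x, ⟪𝔲 j x s, ∑ k, covDeriv β (fun y => 𝔞 k y s) k (fun y => curvK β 𝔞 k j y s) x⟫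
      = -(1 / 2 * ∑ j, ∑ k, ∫ x, ⟪curvK β 𝔞 j k x s, covExtK β 𝔞 𝔲 j k x s⟫) := by
  have hb : ∀ j k, ContDiff ℝ 1 fun x => curvK β 𝔞 j k x s := contDiff_curvK ha
  have ha0 : ∀ j, Continuous fun x => 𝔞 j x s := fun j => (ha j).continuous
  have hDb : ∀ j k, Integrable fun x =>
      ⟪covDeriv β (fun y => 𝔞 k y s) k (fun y => 𝔲 j y s) x, curvK β 𝔞 k j x s⟫ := fun j k =>
    (((hu j).continuous_covDeriv (ha0 k) k).inner
      (hb k j).continuous).integrable_of_hasCompactSupport ((huc j).covDeriv k).inner_right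
  have hbE : ∀ j k, Integrable fun x => ⟪curvK β 𝔞 j k x s, covExtK β 𝔞 𝔲 j k x s⟫ := fun j k =>
    ((hb j k).continuous.inner (((hu k).continuous_covDeriv (ha0 j) j).sub
      ((hu j).continuous_covDeriv (ha0 k) k))).integrable_of_hasCompactSupport
      (((huc k).covDeriv j).sub ((huc j).covDeriv k)).inner_left
  calc ∑ j, ∫ x, ⟪𝔲 j x s, ∑ k, covDeriv β (fun y => 𝔞 k y s) k (fun y => curvK β 𝔞 k j y s) x⟫
      = ∑ j, ∑ k,
          ∫ x, ⟪𝔲 j x s, covDeriv β (fun y => 𝔞 k y s) k (fun y => curvK β 𝔞 k j y s) x⟫ := by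
        refine Finset.sum_congr rfl fun j _ => ?_
        simp only [inner_sum]
        refine integral_finsetSum _ fun k _ => ?_
        exact ((hu j).continuous.inner ((hb k j).continuous_covDeriv (ha0 k)
          k)).integrable_of_hasCompactSupport (huc j).inner_right
    _ = -∫ x, ∑ j, ∑ k,
          ⟪covDeriv β (fun y => 𝔞 k y s) k (fun y => 𝔲 j y s) x, curvK β 𝔞 k j x s⟫ := by
        simp only [integral_inner_covDeriv_eq_neg hinv (ha0 _) (hu _) (hb _ _) (huc _),
          Finset.sum_neg_distrib]
        rw [integral_finsetSum _ fun j _ => integrable_finsetSum _ fun k _ => hDb j k]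
        simp only [integral_finsetSum _ fun k _ => hDb _ k]
    _ = -∫ x, 1 / 2 * ∑ j, ∑ k, ⟪curvK β 𝔞 j k x s, covExtK β 𝔞 𝔲 j k x s⟫ := by
        congr 2 with x
        rw [Finset.sum_comm]
        exact sum_sum_inner_eq_half_sum_sum_inner_sub (fun j k => curvK β 𝔞 j k x s)
          (fun j k => covDeriv β (fun y => 𝔞 j y s) j (fun y => 𝔲 k y s) x)
          (fun j k => curvK_swap halt j k x)
    _ = -(1 / 2 * ∑ j, ∑ k, ∫ x, ⟪curvK β 𝔞 j k x s, covExtK β 𝔞 𝔲 j k x s⟫) := by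
        rw [integral_const_mul,
          integral_finsetSum _ fun j _ => integrable_finsetSum _ fun k _ => hbE j k]
        simp only [integral_finsetSum _ fun k _ => hbE _ k]

end Curvature

section TimeDerivative

variable {𝔨 : Type*} [NormedAddCommGroup 𝔨] [InnerProductSpace ℝ 𝔨]
  {β : 𝔨 →ₗ[ℝ] 𝔨 →ₗ[ℝ] 𝔨} {𝔞 𝔲 : Fin 3 → (Fin 3 → ℝ) → ℝ → 𝔨} {K : Set (Fin 3 → ℝ)}

theorem continuousOn_sum_integral_inner_deriv (h𝔞 : ∀ j, ContDiff ℝ 1 (uncurry (𝔞 j)))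
    (h𝔲 : ∀ j, Continuous (uncurry (𝔲 j))) (hK : IsCompact K)
    (h𝔲K : ∀ j, ∀ x ∉ K, ∀ t, 0 ≤ t → 𝔲 j x t = 0) :
    ContinuousOn (fun t => ∑ j, ∫ x, ⟪𝔲 j x t, deriv (𝔞 j x) t⟫) (Ici 0) :=
  continuousOn_finsetSum _ fun j _ =>
    continuousOn_integral_of_continuous_of_forall_notMem_eq_zero
      ((h𝔲 j).inner ((h𝔞 j).uncurry_deriv (m := 0) (by simp)).continuous) hK
      fun x hx t ht => by simp [h𝔲K j x hx t ht]

variable [FiniteDimensional ℝ 𝔨]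

theorem hasDerivAt_sum_integral_inner_deriv (halt : β.IsAlt)
    (hinv : ∀ x y z : 𝔨, ⟪β z x, y⟫ + ⟪x, β z y⟫ = 0) (hYMP : YangMillsPoissonK β 𝔞)
    (h𝔞 : ∀ j, ContDiff ℝ 2 (uncurry (𝔞 j))) (h𝔲 : ∀ j, ContDiff ℝ 1 (uncurry (𝔲 j)))
    (hK : IsCompact K) (h𝔲K : ∀ j, ∀ x ∉ K, ∀ t, 0 ≤ t → 𝔲 j x t = 0) {s : ℝ} (hs : 0 < s) :
    HasDerivAt (fun t => ∑ j, ∫ x, ⟪𝔲 j x t, deriv (𝔞 j x) t⟫)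
      ((∑ j, ∫ x, ⟪deriv (𝔞 j x) s, deriv (𝔲 j x) s⟫)
        + 1 / 2 * ∑ j, ∑ k, ∫ x, ⟪curvK β 𝔞 j k x s, covExtK β 𝔞 𝔲 j k x s⟫) s := by
  have hYMP' : ∀ j x, ⟪𝔲 j x s, deriv (fun t => deriv (𝔞 j x) t) s⟫
      = -⟪𝔲 j x s, ∑ k, covDeriv β (fun y => 𝔞 k y s) k (fun y => curvK β 𝔞 k j y s) x⟫ := by
    intro j x
    rw [hYMP j x s hs.le, inner_neg_right]
    rfl
  refine (HasDerivAt.fun_sum fun j _ => hasDerivAt_integral_inner_deriv (h𝔞 j) (h𝔲 j) hK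
    isOpen_Ioi (fun x hx t ht => h𝔲K j x hx t ht.le) hs).congr_deriv ?_
  simp only [Finset.sum_add_distrib, hYMP', integral_neg, Finset.sum_neg_distrib]
  rw [sum_integral_inner_covDeriv_curvK halt hinv (fun j => (h𝔞 j).uncurry_right s)
    (fun j => (h𝔲 j).uncurry_right s)
    (fun j => HasCompactSupport.intro hK fun x hx => h𝔲K j x hx s hs.le), neg_neg]

end TimeDerivative

theorem norm_le_sqrt_sum_sq {ι : Type*} [Fintype ι] (x : ι → ℝ) : ‖x‖ ≤ √(∑ i, x i ^ 2) := by
  refine (pi_norm_le_iff_of_nonneg (Real.sqrt_nonneg _)).2 fun i => ?_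
  rw [Real.norm_eq_abs, ← Real.sqrt_sq_eq_abs]
  exact Real.sqrt_le_sqrt
    (Finset.single_le_sum (f := fun i => x i ^ 2) (fun i _ => sq_nonneg _) (Finset.mem_univ i))

theorem poissonAction_firstDerivative_identity_general
    (𝔨 : Type*) [NormedAddCommGroup 𝔨] [InnerProductSpace ℝ 𝔨]
    [FiniteDimensional ℝ 𝔨]
    (β : 𝔨 →ₗ[ℝ] 𝔨 →ₗ[ℝ] 𝔨)
    (halt : ∀ x : 𝔨, β x x = 0)
    (hinv : ∀ x y z : 𝔨, (inner ℝ (β z x) y : ℝ) + (inner ℝ x (β z y) : ℝ) = 0)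
    (𝔞 𝔲 : Fin 3 → (Fin 3 → ℝ) → ℝ → 𝔨)
    (h𝔞 : ∀ j, ContDiff ℝ (⊤ : ℕ∞) fun p : (Fin 3 → ℝ) × ℝ => 𝔞 j p.1 p.2)
    (h𝔲 : ∀ j, ContDiff ℝ (⊤ : ℕ∞) fun p : (Fin 3 → ℝ) × ℝ => 𝔲 j p.1 p.2)
    (hYMP : YangMillsPoissonK β 𝔞)
    (R : ℝ)
    (hsupp𝔲 : ∀ j (x : Fin 3 → ℝ) (s : ℝ), 0 ≤ s →
      R ≤ Real.sqrt (∑ i, x i ^ 2) → 𝔲 j x s = 0)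
    (hint : IntegrableOn
      (fun s : ℝ =>
        (∑ j, ∫ x : Fin 3 → ℝ,
          (inner ℝ (deriv (fun σ => 𝔞 j x σ) s) (deriv (fun σ => 𝔲 j x σ) s) : ℝ))
        + (1 / 2) * ∑ j, ∑ k, ∫ x : Fin 3 → ℝ,
            (inner ℝ (curvK β 𝔞 j k x s) (covExtK β 𝔞 𝔲 j k x s) : ℝ))
      (Set.Ioi (0 : ℝ)))
    (hdecay : Filter.Tendsto
      (fun s : ℝ => ∑ j, ∫ x : Fin 3 → ℝ,
        (inner ℝ (𝔲 j x s) (deriv (fun σ => 𝔞 j x σ) s) : ℝ))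
      Filter.atTop (nhds 0)) :
    ∫ s in Set.Ioi (0 : ℝ),
        ((∑ j, ∫ x : Fin 3 → ℝ,
          (inner ℝ (deriv (fun σ => 𝔞 j x σ) s) (deriv (fun σ => 𝔲 j x σ) s) : ℝ))
        + (1 / 2) * ∑ j, ∑ k, ∫ x : Fin 3 → ℝ,
            (inner ℝ (curvK β 𝔞 j k x s) (covExtK β 𝔞 𝔲 j k x s) : ℝ))
      = -(∑ j, ∫ x : Fin 3 → ℝ,
          (inner ℝ (𝔲 j x 0) (deriv (fun σ => 𝔞 j x σ) 0) : ℝ)) := by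
  have hK : IsCompact (Metric.closedBall (0 : Fin 3 → ℝ) R) := isCompact_closedBall 0 R
  have h𝔲K : ∀ j, ∀ x ∉ Metric.closedBall (0 : Fin 3 → ℝ) R, ∀ t, 0 ≤ t → 𝔲 j x t = 0 :=
    fun j x hx t ht => hsupp𝔲 j x t ht <|
      (not_le.1 (by simpa using hx)).le.trans (norm_le_sqrt_sum_sq x)
  have h𝔞₂ : ∀ j, ContDiff ℝ 2 (uncurry (𝔞 j)) := fun j =>
    (h𝔞 j).of_le (WithTop.coe_le_coe.2 le_top)
  rw [integral_Ioi_of_hasDerivAt_of_tendsto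
    (continuousOn_sum_integral_inner_deriv (fun j => (h𝔞₂ j).of_le one_le_two)
      (fun j => (h𝔲 j).continuous) hK h𝔲K 0 self_mem_Ici)
    (fun s hs => hasDerivAt_sum_integral_inner_deriv halt hinv hYMP h𝔞₂
      (fun j => (h𝔲 j).of_le (WithTop.coe_le_coe.2 le_top)) hK h𝔲K hs) hint hdecay, zero_sub]

/-- Let `𝔨` be a finite-dimensional real Lie algebra with an
invariant inner product, `𝔞` a smooth compactly (in `x`) supported solution of
the Yang–Mills–Poisson equation and `𝔲` a smooth compactly supported map.  If
`s ↦ (∂_s 𝔞(·,s), ∂_s 𝔲(·,s))_{L²} + (𝔟(·,s), d_𝔞 𝔲(·,s))_{L²}` is integrable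
on `[0,∞)` and `(𝔲(·,s), ∂_s 𝔞(·,s))_{L²} → 0` as `s → ∞`, then
`∫₀^∞ [(∂_s 𝔞, ∂_s 𝔲)_{L²} + (𝔟, d_𝔞 𝔲)_{L²}] ds = −(𝔲(·,0), ∂_s 𝔞(·,0))_{L²}`. -/
theorem poissonAction_firstDerivative_identity
    (𝔨 : Type*) [NormedAddCommGroup 𝔨] [InnerProductSpace ℝ 𝔨]
    [FiniteDimensional ℝ 𝔨]
    (β : 𝔨 →ₗ[ℝ] 𝔨 →ₗ[ℝ] 𝔨)
    (halt : ∀ x : 𝔨, β x x = 0)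
    (hjac : ∀ x y z : 𝔨, β x (β y z) + β y (β z x) + β z (β x y) = 0)
    (hinv : ∀ x y z : 𝔨, (inner ℝ (β z x) y : ℝ) + (inner ℝ x (β z y) : ℝ) = 0)
    (𝔞 𝔲 : Fin 3 → (Fin 3 → ℝ) → ℝ → 𝔨)
    (h𝔞 : ∀ j, ContDiff ℝ (⊤ : ℕ∞) fun p : (Fin 3 → ℝ) × ℝ => 𝔞 j p.1 p.2)
    (h𝔲 : ∀ j, ContDiff ℝ (⊤ : ℕ∞) fun p : (Fin 3 → ℝ) × ℝ => 𝔲 j p.1 p.2)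
    (hYMP : YangMillsPoissonK β 𝔞)
    (R : ℝ) (hR : 0 < R)
    (hsupp𝔞 : ∀ j (x : Fin 3 → ℝ) (s : ℝ), 0 ≤ s →
      R ≤ Real.sqrt (∑ i, x i ^ 2) → 𝔞 j x s = 0)
    (hsupp𝔲 : ∀ j (x : Fin 3 → ℝ) (s : ℝ), 0 ≤ s →
      R ≤ Real.sqrt (∑ i, x i ^ 2) → 𝔲 j x s = 0)
    (hint : IntegrableOn
      (fun s : ℝ =>
        (∑ j, ∫ x : Fin 3 → ℝ,
          (inner ℝ (deriv (fun σ => 𝔞 j x σ) s) (deriv (fun σ => 𝔲 j x σ) s) : ℝ))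
        + (1 / 2) * ∑ j, ∑ k, ∫ x : Fin 3 → ℝ,
            (inner ℝ (curvK β 𝔞 j k x s) (covExtK β 𝔞 𝔲 j k x s) : ℝ))
      (Set.Ioi (0 : ℝ)))
    (hdecay : Filter.Tendsto
      (fun s : ℝ => ∑ j, ∫ x : Fin 3 → ℝ,
        (inner ℝ (𝔲 j x s) (deriv (fun σ => 𝔞 j x σ) s) : ℝ))
      Filter.atTop (nhds 0)) :
    ∫ s in Set.Ioi (0 : ℝ),
        ((∑ j, ∫ x : Fin 3 → ℝ,
          (inner ℝ (deriv (fun σ => 𝔞 j x σ) s) (deriv (fun σ => 𝔲 j x σ) s) : ℝ))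
        + (1 / 2) * ∑ j, ∑ k, ∫ x : Fin 3 → ℝ,
            (inner ℝ (curvK β 𝔞 j k x s) (covExtK β 𝔞 𝔲 j k x s) : ℝ))
      = -(∑ j, ∫ x : Fin 3 → ℝ,
          (inner ℝ (𝔲 j x 0) (deriv (fun σ => 𝔞 j x σ) 0) : ℝ)) :=
  poissonAction_firstDerivative_identity_general 𝔨 β halt hinv 𝔞 𝔲 h𝔞 h𝔲 hYMP R hsupp𝔲 hint hdecay
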